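/- arXiv:2509.15881 — 2 statements merged into one kernel-verified Lean document; each statement's English description precedes it below -/
import Mathlib

section
/- If φ(p) = A₁e^{γp} + A₂pe^{γp} satisfies φ(−1) = 0 and β(α_c,γ)A₁ − (p₀²/γ)(γA₁ + A₂) = 0, where 0 < γ < 1, p₀ ≠ 0, β(α,γ) = γ²e^{3γ}(α − e^{γ}), and α_c = e^{γ} + 2p₀²/(γ²e^{γ}(e^{2γ}−1)), then A₁ = A₂ = 0. -/
open Real

/-! Since `φ(-1) = 0` forces `A₁ = A₂`, the second condition says that `A₂` times
`β(α_c, γ) - (p₀² / γ) (γ + 1) = p₀² ((1 + γ) - (1 - γ) e^{2γ}) / (γ (e^{2γ} - 1))` vanishes.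
This coefficient is positive because `e^{2γ} < (1 + γ) / (1 - γ)`, i.e. `γ < artanh γ`, which
can be read off the power series of `log (1 + γ) - log (1 - γ)`. -/

lemma two_mul_lt_log_one_add_sub_log_one_sub {x : ℝ} (h0 : 0 < x) (h1 : x < 1) :
    2 * x < log (1 + x) - log (1 - x) := by
  have hs := hasSum_log_sub_log_of_abs_lt_one (abs_lt.2 ⟨by linarith, h1⟩)
  have hle := sum_le_hasSum (Finset.range 2) (fun k _ ↦ by positivity) hs
  norm_num [Finset.sum_range_succ] at hle
  nlinarith [pow_pos h0 3]

lemma one_sub_mul_exp_two_mul_lt {x : ℝ} (h0 : 0 < x) (h1 : x < 1) :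
    (1 - x) * exp (2 * x) < 1 + x := by
  have hlt : exp (2 * x) < (1 + x) / (1 - x) := by
    calc exp (2 * x) < exp (log (1 + x) - log (1 - x)) :=
          exp_lt_exp.2 (two_mul_lt_log_one_add_sub_log_one_sub h0 h1)
      _ = (1 + x) / (1 - x) := by
          rw [exp_sub, exp_log (by linarith), exp_log (by linarith)]
  rwa [lt_div_iff₀ (by linarith), mul_comm] at hlt

noncomputable def criticalCoeff (γ p₀ : ℝ) : ℝ :=
  γ ^ 2 * exp (3 * γ) * (2 * p₀ ^ 2 / (γ ^ 2 * exp γ * (exp (2 * γ) - 1)))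
    - p₀ ^ 2 / γ * (γ + 1)

lemma criticalCoeff_eq {γ : ℝ} (hγ : 0 < γ) (p₀ : ℝ) :
    criticalCoeff γ p₀
      = p₀ ^ 2 * ((1 + γ) - (1 - γ) * exp (2 * γ)) / (γ * (exp (2 * γ) - 1)) := by
  have hexp : exp (3 * γ) = exp γ * exp (2 * γ) := by rw [← exp_add]; ring_nf
  have hne : exp (2 * γ) - 1 ≠ 0 := (sub_pos.2 (one_lt_exp_iff.2 (by positivity))).ne'
  rw [criticalCoeff, hexp]
  generalize exp (2 * γ) = E at hne ⊢
  have hE := exp_pos γ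
  field_simp
  ring

lemma criticalCoeff_pos {γ p₀ : ℝ} (hγ0 : 0 < γ) (hγ1 : γ < 1) (hp : p₀ ≠ 0) :
    0 < criticalCoeff γ p₀ := by
  have hpos : 0 < exp (2 * γ) - 1 := sub_pos.2 (one_lt_exp_iff.2 (by positivity))
  have hgap : 0 < (1 + γ) - (1 - γ) * exp (2 * γ) :=
    sub_pos.2 (one_sub_mul_exp_two_mul_lt hγ0 hγ1)
  rw [criticalCoeff_eq hγ0]
  positivity

theorem stmt_8 (γ p₀ : ℝ) (hγ0 : 0 < γ) (hγ1 : γ < 1) (hp : p₀ ≠ 0)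
    (β : ℝ → ℝ) (hβ : ∀ α, β α = γ ^ 2 * Real.exp (3 * γ) * (α - Real.exp γ))
    (αc : ℝ)
    (hαc : αc = Real.exp γ + 2 * p₀ ^ 2 / (γ ^ 2 * Real.exp γ * (Real.exp (2 * γ) - 1)))
    (A₁ A₂ : ℝ)
    (hbd : A₁ * Real.exp (γ * (-1)) + A₂ * (-1) * Real.exp (γ * (-1)) = 0)
    (hbc : β αc * A₁ - (p₀ ^ 2 / γ) * (γ * A₁ + A₂) = 0) :
    A₁ = 0 ∧ A₂ = 0 := by
  have hA : A₂ = A₁ := by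
    have h : (A₁ - A₂) * exp (γ * (-1)) = 0 := by linear_combination hbd
    linarith [(mul_eq_zero.1 h).resolve_right (exp_pos _).ne']
  subst hA
  have hc : criticalCoeff γ p₀ * A₂ = 0 := by
    rw [hβ, hαc] at hbc
    rw [criticalCoeff]
    linear_combination hbc
  have hA₂ := (mul_eq_zero.1 hc).resolve_left (criticalCoeff_pos hγ0 hγ1 hp).ne'
  exact ⟨hA₂, hA₂⟩
end

section
/- The function h₁(p,q) = −(3/2)e^{γ(3p−1)} + (1/2)e^{−γ(p+5)} + e^{γ(p−3)}cos(2q) satisfies (1+H)³[(1+H)^{−1}h₁]_{pp} + γ²(1+H)²(h₁)_{qq} = 2γ²e^{(p−3)γ}(1 − 2e^{2(p+1)γ}cos(2q) − 3e^{4(p+1)γ}), where H(p) = e^{γ(p+1)} − 1. -/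
open Real

private lemma hd_exp (a k c : ℝ) (x : ℝ) :
    HasDerivAt (fun t => a * Real.exp (k * t + c)) (a * k * Real.exp (k * x + c)) x := by
  have h := (((hasDerivAt_id x).const_mul k).add_const c).exp.const_mul a
  refine h.congr_deriv ?_
  simp [id]; ring

private lemma exp_comb (x y : ℝ) (a b : ℕ) :
    Real.exp (a * x + b * y) = Real.exp x ^ a * Real.exp y ^ b := by
  rw [Real.exp_add, Real.exp_nat_mul, Real.exp_nat_mul]

private lemma exp_comb' (x y : ℝ) (a b : ℕ) :
    Real.exp (a * x + -(b * y)) = Real.exp x ^ a * (Real.exp y ^ b)⁻¹ := by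
  rw [Real.exp_add, Real.exp_neg, Real.exp_nat_mul, Real.exp_nat_mul]

private lemma exp_comb'' (x y : ℝ) (a b : ℕ) :
    Real.exp (-(a * x) + -(b * y)) = (Real.exp x ^ a)⁻¹ * (Real.exp y ^ b)⁻¹ := by
  rw [Real.exp_add, Real.exp_neg, Real.exp_neg, Real.exp_nat_mul, Real.exp_nat_mul]

theorem stmt_19 (γ : ℝ) (hγ : 0 < γ)
    (H : ℝ → ℝ) (hH : ∀ p, H p = Real.exp (γ * (p + 1)) - 1)
    (h₁ : ℝ → ℝ → ℝ)
    (hh₁ : ∀ p q, h₁ p q = -(3 / 2) * Real.exp (γ * (3 * p - 1)) +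
      (1 / 2) * Real.exp (-γ * (p + 5)) + Real.exp (γ * (p - 3)) * Real.cos (2 * q)) :
    ∀ p q : ℝ,
      (1 + H p) ^ 3 * deriv (deriv (fun p' => (1 + H p')⁻¹ * h₁ p' q)) p +
        γ ^ 2 * (1 + H p) ^ 2 * deriv (deriv (fun q' => h₁ p q')) q =
      2 * γ ^ 2 * Real.exp ((p - 3) * γ) *
        (1 - 2 * Real.exp (2 * (p + 1) * γ) * Real.cos (2 * q) -
          3 * Real.exp (4 * (p + 1) * γ)) := by
  have vne : Real.exp γ ≠ 0 := Real.exp_ne_zero γ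
  intro p q
  have hfun : (fun p' => (1 + H p')⁻¹ * h₁ p' q) =
      fun p' => (-(3/2) * Real.exp (2*γ*p' + (-2*γ)) + (1/2) * Real.exp ((-2*γ)*p' + (-6*γ)))
        + Real.exp (-4*γ) * Real.cos (2*q) := by
    funext p'
    have une : Real.exp (γ * p') ≠ 0 := Real.exp_ne_zero _
    rw [hH, hh₁]
    rw [show (1 : ℝ) + (Real.exp (γ * (p' + 1)) - 1) = Real.exp (γ * (p' + 1)) by ring,
        ← Real.exp_neg]
    rw [show (-(γ * (p' + 1)) : ℝ) = -((1:ℕ)*(γ*p')) + -((1:ℕ)*γ) by push_cast; ring,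
        exp_comb'',
        show (γ * (3 * p' - 1) : ℝ) = (3:ℕ)*(γ*p') + -((1:ℕ)*γ) by push_cast; ring,
        exp_comb',
        show (-γ * (p' + 5) : ℝ) = -((1:ℕ)*(γ*p')) + -((5:ℕ)*γ) by push_cast; ring,
        exp_comb'',
        show (γ * (p' - 3) : ℝ) = (1:ℕ)*(γ*p') + -((3:ℕ)*γ) by push_cast; ring,
        exp_comb',
        show (2*γ*p' + (-2*γ) : ℝ) = (2:ℕ)*(γ*p') + -((2:ℕ)*γ) by push_cast; ring,
        exp_comb',
        show ((-2*γ)*p' + (-6*γ) : ℝ) = -((2:ℕ)*(γ*p')) + -((6:ℕ)*γ) by push_cast; ring,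
        exp_comb'',
        show (-4*γ : ℝ) = -((0:ℕ)*(γ*p')) + -((4:ℕ)*γ) by push_cast; ring,
        exp_comb'']
    field_simp
  rw [hfun]
  have d1 : deriv (fun p' => (-(3/2) * Real.exp (2*γ*p' + (-2*γ)) + (1/2) * Real.exp ((-2*γ)*p' + (-6*γ))) + Real.exp (-4*γ) * Real.cos (2*q)) =
      fun x => (-(3/2)*(2*γ)) * Real.exp (2*γ*x + (-2*γ)) + ((1/2)*(-2*γ)) * Real.exp ((-2*γ)*x + (-6*γ)) := by
    funext x
    have h := ((hd_exp (-(3/2)) (2*γ) (-2*γ) x).add (hd_exp (1/2) (-2*γ) (-6*γ) x)).add_const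
      (Real.exp (-4*γ) * Real.cos (2*q))
    exact h.deriv
  rw [d1]
  have d2 : deriv (fun x => (-(3/2)*(2*γ)) * Real.exp (2*γ*x + (-2*γ)) + ((1/2)*(-2*γ)) * Real.exp ((-2*γ)*x + (-6*γ))) p =
      (-(3/2)*(2*γ)*(2*γ)) * Real.exp (2*γ*p + (-2*γ)) + ((1/2)*(-2*γ)*(-2*γ)) * Real.exp ((-2*γ)*p + (-6*γ)) := by
    have h := (hd_exp (-(3/2)*(2*γ)) (2*γ) (-2*γ) p).add (hd_exp ((1/2)*(-2*γ)) (-2*γ) (-6*γ) p)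
    exact h.deriv
  rw [d2]
  have hfq : (fun q' => h₁ p q') =
      fun q' => Real.exp (γ * (p - 3)) * Real.cos (2*q') +
        (-(3/2) * Real.exp (γ * (3*p - 1)) + (1/2) * Real.exp (-γ * (p + 5))) := by
    funext q'; rw [hh₁]; ring
  rw [hfq]
  have hcos : ∀ (a : ℝ) (x : ℝ), HasDerivAt (fun t => a * Real.cos (2*t)) (-(2*a) * Real.sin (2*x)) x := by
    intro a x
    have h := (((hasDerivAt_id x).const_mul 2).cos).const_mul a
    refine h.congr_deriv ?_
    simp [id]; ring
  have hsin : ∀ (a : ℝ) (x : ℝ), HasDerivAt (fun t => a * Real.sin (2*t)) (2*a * Real.cos (2*x)) x := by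
    intro a x
    have h := (((hasDerivAt_id x).const_mul 2).sin).const_mul a
    refine h.congr_deriv ?_
    simp [id]; ring
  have e1 : deriv (fun q' => Real.exp (γ * (p - 3)) * Real.cos (2*q') +
        (-(3/2) * Real.exp (γ * (3*p - 1)) + (1/2) * Real.exp (-γ * (p + 5)))) =
      fun x => -(2 * Real.exp (γ * (p - 3))) * Real.sin (2*x) := by
    funext x
    exact ((hcos (Real.exp (γ * (p - 3))) x).add_const _).deriv
  rw [e1]
  rw [(hsin (-(2 * Real.exp (γ * (p - 3)))) q).deriv]
  rw [hH, show (1 : ℝ) + (Real.exp (γ * (p + 1)) - 1) = Real.exp (γ * (p + 1)) by ring]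
  have une : Real.exp (γ * p) ≠ 0 := Real.exp_ne_zero _
  rw [show (γ * (p + 1) : ℝ) = (1:ℕ)*(γ*p) + ((1:ℕ)*γ) by push_cast; ring, exp_comb,
      show (2*γ*p + (-2*γ) : ℝ) = (2:ℕ)*(γ*p) + -((2:ℕ)*γ) by push_cast; ring, exp_comb',
      show ((-2*γ)*p + (-6*γ) : ℝ) = -((2:ℕ)*(γ*p)) + -((6:ℕ)*γ) by push_cast; ring, exp_comb'',
      show (γ * (p - 3) : ℝ) = (1:ℕ)*(γ*p) + -((3:ℕ)*γ) by push_cast; ring, exp_comb',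
      show ((p - 3) * γ : ℝ) = (1:ℕ)*(γ*p) + -((3:ℕ)*γ) by push_cast; ring, exp_comb',
      show (2 * (p + 1) * γ : ℝ) = (2:ℕ)*(γ*p) + ((2:ℕ)*γ) by push_cast; ring, exp_comb,
      show (4 * (p + 1) * γ : ℝ) = (4:ℕ)*(γ*p) + ((4:ℕ)*γ) by push_cast; ring, exp_comb]
  field_simp
  ring
end
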